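/- Let Ω ⊆ ℝ³ be open, let f : Ω → ℝ be twice continuously differentiable with f > 0 on Ω, set α := ∇f/f, and let h₀ : Ω → ℝ be twice differentiable. Define v := ∇h₀ − h₀·α. Then for every x ∈ Ω: Sc( Dv(x) − α(x)·star(v(x)) ) = −Δh₀(x) + ( Δf(x)/f(x) )·h₀(x). -/

import Mathlib

open MeasureTheory

noncomputable section

/-- The quaternion unit `i`. -/
def qi : Quaternion ℝ := ⟨0, 1, 0, 0⟩
/-- The quaternion unit `j`. -/
def qj : Quaternion ℝ := ⟨0, 0, 1, 0⟩
/-- The quaternion unit `k`. -/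
def qk : Quaternion ℝ := ⟨0, 0, 0, 1⟩

/-- Partial derivative of a quaternion-valued function on `ℝ³`. -/
def pd (i : Fin 3) (w : (Fin 3 → ℝ) → Quaternion ℝ) (x : Fin 3 → ℝ) : Quaternion ℝ :=
  fderiv ℝ w x (Pi.single i 1)

/-- Partial derivative of a real-valued function on `ℝ³`. -/
def pdR (i : Fin 3) (u : (Fin 3 → ℝ) → ℝ) (x : Fin 3 → ℝ) : ℝ :=
  fderiv ℝ u x (Pi.single i 1)

/-- Moisil–Teodorescu operator `Dw = i ∂₁ w + j ∂₂ w + k ∂₃ w`. -/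
def Dq (w : (Fin 3 → ℝ) → Quaternion ℝ) (x : Fin 3 → ℝ) : Quaternion ℝ :=
  qi * pd 0 w x + qj * pd 1 w x + qk * pd 2 w x

/-- Gradient of a real-valued function, viewed as a pure quaternion. -/
def gradq (u : (Fin 3 → ℝ) → ℝ) (x : Fin 3 → ℝ) : Quaternion ℝ :=
  ⟨0, pdR 0 u x, pdR 1 u x, pdR 2 u x⟩

/-- Laplacian of a real-valued function on `ℝ³`. -/
def lapl (u : (Fin 3 → ℝ) → ℝ) (x : Fin 3 → ℝ) : ℝ :=
  pdR 0 (pdR 0 u) x + pdR 1 (pdR 1 u) x + pdR 2 (pdR 2 u) x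

/-- Vector (non-scalar) part of a quaternion. -/
def Vecq (q : Quaternion ℝ) : Quaternion ℝ := q - (q.re : Quaternion ℝ)

/-- Divergence of the vector part of a quaternion-valued function. -/
def divVec (α : (Fin 3 → ℝ) → Quaternion ℝ) (x : Fin 3 → ℝ) : ℝ :=
  pdR 0 (fun y => (α y).imI) x + pdR 1 (fun y => (α y).imJ) x + pdR 2 (fun y => (α y).imK) x

/-!
For any quaternion field `w`, `Sc (D w) = -div (Vec w)`, and `Sc (a * star b) = ⟪a, b⟫`, so the
scalar part in question is `-div v - ⟪α, v⟫`. For `v = ∇h₀ - h₀ α` the product rule for the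
divergence turns this into `-Δh₀ + h₀ (div α + |α|²)`, and for `α = ∇f / f` the Riccati identity
`div α + |α|² = Δf / f` finishes the computation.
-/

open Quaternion
open scoped RealInnerProductSpace

section

variable {x : Fin 3 → ℝ}

lemma pdR_sub {u g : (Fin 3 → ℝ) → ℝ} (hu : DifferentiableAt ℝ u x)
    (hg : DifferentiableAt ℝ g x) (i : Fin 3) :
    pdR i (fun y => u y - g y) x = pdR i u x - pdR i g x := by
  simp [pdR, fderiv_fun_sub hu hg]

lemma pdR_mul {u g : (Fin 3 → ℝ) → ℝ} (hu : DifferentiableAt ℝ u x)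
    (hg : DifferentiableAt ℝ g x) (i : Fin 3) :
    pdR i (fun y => u y * g y) x = u x * pdR i g x + g x * pdR i u x := by
  simp [pdR, fderiv_fun_mul hu hg]

lemma pdR_inv {u : (Fin 3 → ℝ) → ℝ} (hu : DifferentiableAt ℝ u x) (hx : u x ≠ 0)
    (i : Fin 3) :
    pdR i (fun y => (u y)⁻¹) x = -((u x) ^ 2)⁻¹ * pdR i u x := by
  rw [pdR, show (fun y => (u y)⁻¹) = (·⁻¹) ∘ u from rfl,
    fderiv_comp x (differentiableAt_inv hx) hu, fderiv_inv]
  simp [pdR, mul_comm]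

lemma differentiableAt_pdR {u : (Fin 3 → ℝ) → ℝ}
    (hu : DifferentiableAt ℝ (fderiv ℝ u) x) (i : Fin 3) : DifferentiableAt ℝ (pdR i u) x :=
  (ContinuousLinearMap.apply ℝ ℝ (Pi.single i 1 : Fin 3 → ℝ)).differentiableAt.comp x hu

lemma pdR_clm_comp (L : ℍ →L[ℝ] ℝ) {w : (Fin 3 → ℝ) → ℍ}
    (hw : DifferentiableAt ℝ w x) (i : Fin 3) : pdR i (fun y => L (w y)) x = L (pd i w x) := by
  rw [pdR, pd, fderiv_fun_comp x L.differentiableAt hw, L.fderiv]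
  rfl

/-- The `k`-th real coordinate of a quaternion, in the order `re, imI, imJ, imK`. -/
def quaternionCoordCLM (k : Fin 4) : ℍ →L[ℝ] ℝ :=
  (EuclideanSpace.proj k).comp
    linearIsometryEquivTuple.toContinuousLinearEquiv.toContinuousLinearMap

lemma differentiableAt_imI {w : (Fin 3 → ℝ) → ℍ} (hw : DifferentiableAt ℝ w x) :
    DifferentiableAt ℝ (fun y => (w y).imI) x :=
  (quaternionCoordCLM 1).differentiableAt.comp x hw

lemma differentiableAt_imJ {w : (Fin 3 → ℝ) → ℍ} (hw : DifferentiableAt ℝ w x) :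
    DifferentiableAt ℝ (fun y => (w y).imJ) x :=
  (quaternionCoordCLM 2).differentiableAt.comp x hw

lemma differentiableAt_imK {w : (Fin 3 → ℝ) → ℍ} (hw : DifferentiableAt ℝ w x) :
    DifferentiableAt ℝ (fun y => (w y).imK) x :=
  (quaternionCoordCLM 3).differentiableAt.comp x hw

lemma imI_pd {w : (Fin 3 → ℝ) → ℍ} (hw : DifferentiableAt ℝ w x)
    (i : Fin 3) : (pd i w x).imI = pdR i (fun y => (w y).imI) x :=
  (pdR_clm_comp (quaternionCoordCLM 1) hw i).symm

lemma imJ_pd {w : (Fin 3 → ℝ) → ℍ} (hw : DifferentiableAt ℝ w x)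
    (i : Fin 3) : (pd i w x).imJ = pdR i (fun y => (w y).imJ) x :=
  (pdR_clm_comp (quaternionCoordCLM 2) hw i).symm

lemma imK_pd {w : (Fin 3 → ℝ) → ℍ} (hw : DifferentiableAt ℝ w x)
    (i : Fin 3) : (pd i w x).imK = pdR i (fun y => (w y).imK) x :=
  (pdR_clm_comp (quaternionCoordCLM 3) hw i).symm

lemma re_Dq {w : (Fin 3 → ℝ) → ℍ} (hw : DifferentiableAt ℝ w x) :
    (Dq w x).re = -divVec w x := by
  simp only [Dq, re_add, re_mul, imI_pd hw, imJ_pd hw, imK_pd hw]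
  simp [qi, qj, qk, divVec]
  ring

lemma divVec_sub {v w : (Fin 3 → ℝ) → ℍ} (hv : DifferentiableAt ℝ v x)
    (hw : DifferentiableAt ℝ w x) :
    divVec (fun y => v y - w y) x = divVec v x - divVec w x := by
  simp only [divVec, imI_sub, imJ_sub, imK_sub]
  rw [pdR_sub (differentiableAt_imI hv) (differentiableAt_imI hw),
    pdR_sub (differentiableAt_imJ hv) (differentiableAt_imJ hw),
    pdR_sub (differentiableAt_imK hv) (differentiableAt_imK hw)]
  ring

lemma divVec_smul {g : (Fin 3 → ℝ) → ℝ} {w : (Fin 3 → ℝ) → ℍ}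
    (hg : DifferentiableAt ℝ g x) (hw : DifferentiableAt ℝ w x) :
    divVec (fun y => g y • w y) x = g x * divVec w x + ⟪gradq g x, w x⟫ := by
  simp only [divVec, imI_smul, imJ_smul, imK_smul, smul_eq_mul]
  rw [pdR_mul hg (differentiableAt_imI hw), pdR_mul hg (differentiableAt_imJ hw),
    pdR_mul hg (differentiableAt_imK hw), inner_def, re_mul]
  simp [gradq]
  ring

lemma divVec_gradq (u : (Fin 3 → ℝ) → ℝ) : divVec (gradq u) = lapl u := rfl

lemma gradq_eq_sum_smul (u : (Fin 3 → ℝ) → ℝ) :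
    gradq u = fun y => pdR 0 u y • qi + pdR 1 u y • qj + pdR 2 u y • qk := by
  funext y
  ext <;> simp [gradq] <;> simp [qi, qj, qk]

lemma differentiableAt_gradq {u : (Fin 3 → ℝ) → ℝ}
    (hu : DifferentiableAt ℝ (fderiv ℝ u) x) :
    DifferentiableAt ℝ (gradq u) x := by
  rw [gradq_eq_sum_smul]
  exact (((differentiableAt_pdR hu 0).smul_const qi).add
    ((differentiableAt_pdR hu 1).smul_const qj)).add
    ((differentiableAt_pdR hu 2).smul_const qk)

lemma gradq_inv {u : (Fin 3 → ℝ) → ℝ} (hu : DifferentiableAt ℝ u x) (hx : u x ≠ 0) :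
    gradq (fun y => (u y)⁻¹) x = -((u x) ^ 2)⁻¹ • gradq u x := by
  ext <;> simp <;> simp [gradq, pdR_inv hu hx]

lemma re_Dq_sub_mul_star {w : (Fin 3 → ℝ) → ℍ} (hw : DifferentiableAt ℝ w x) (a : ℍ) :
    (Dq w x - a * star (w x)).re = -divVec w x - ⟪a, w x⟫ := by
  rw [re_sub, re_Dq hw, inner_def]

lemma divVec_inv_smul_gradq_add_inner_self {f : (Fin 3 → ℝ) → ℝ}
    (hf : DifferentiableAt ℝ f x) (hf' : DifferentiableAt ℝ (fderiv ℝ f) x) (hx : f x ≠ 0) :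
    divVec (fun y => (f y)⁻¹ • gradq f y) x
        + ⟪(f x)⁻¹ • gradq f x, (f x)⁻¹ • gradq f x⟫ = lapl f x / f x := by
  have hf_inv : DifferentiableAt ℝ (fun y => (f y)⁻¹) x := hf.inv hx
  rw [divVec_smul hf_inv (differentiableAt_gradq hf'), divVec_gradq, gradq_inv hf hx,
    real_inner_smul_left, real_inner_smul_left, real_inner_smul_right]
  field_simp
  ring

theorem re_Dq_sub_mul_star_eq_schrodinger {f h : (Fin 3 → ℝ) → ℝ}
    (hf : DifferentiableAt ℝ f x) (hf' : DifferentiableAt ℝ (fderiv ℝ f) x) (hx : f x ≠ 0)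
    (hh : DifferentiableAt ℝ h x) (hh' : DifferentiableAt ℝ (fderiv ℝ h) x) :
    (Dq (fun y => gradq h y - h y • ((f y)⁻¹ • gradq f y)) x
        - ((f x)⁻¹ • gradq f x) * star (gradq h x - h x • ((f x)⁻¹ • gradq f x))).re =
      -lapl h x + (lapl f x / f x) * h x := by
  have hα : DifferentiableAt ℝ (fun y => (f y)⁻¹ • gradq f y) x :=
    (hf.inv hx).smul (differentiableAt_gradq hf')
  have hhα : DifferentiableAt ℝ (fun y => h y • ((f y)⁻¹ • gradq f y)) x := hh.smul hα
  have hv : DifferentiableAt ℝ (fun y => gradq h y - h y • ((f y)⁻¹ • gradq f y)) x :=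
    (differentiableAt_gradq hh').sub hhα
  rw [re_Dq_sub_mul_star hv, divVec_sub (differentiableAt_gradq hh') hhα, divVec_smul hh hα,
    divVec_gradq, ← divVec_inv_smul_gradq_add_inner_self hf hf' hx, inner_sub_right,
    real_inner_smul_right _ _ (h x), real_inner_comm (gradq h x)]
  ring

end

/-- for `α = ∇f/f` (and `β = 0`), the factorization reduces to the
Schrödinger operator `−Δ + Δf/f`. -/
theorem factorization_schrodinger (Ω : Set (Fin 3 → ℝ)) (hΩ : IsOpen Ω)
    (f : (Fin 3 → ℝ) → ℝ) (hf : ContDiffOn ℝ 2 f Ω) (hfpos : ∀ x ∈ Ω, 0 < f x)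
    (h₀ : (Fin 3 → ℝ) → ℝ)
    (hh₀ : ∀ x ∈ Ω, DifferentiableAt ℝ h₀ x)
    (hh₀' : ∀ x ∈ Ω, DifferentiableAt ℝ (fderiv ℝ h₀) x) :
    ∀ x ∈ Ω,
      (Dq (fun y => gradq h₀ y - h₀ y • ((f y)⁻¹ • gradq f y)) x
          - ((f x)⁻¹ • gradq f x) *
              star (gradq h₀ x - h₀ x • ((f x)⁻¹ • gradq f x))).re =
        -lapl h₀ x + (lapl f x / f x) * h₀ x := by
  intro x hx
  have hfx : ContDiffAt ℝ 2 f x := hf.contDiffAt (hΩ.mem_nhds hx)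
  exact re_Dq_sub_mul_star_eq_schrodinger (hfx.differentiableAt two_ne_zero)
    ((hfx.fderiv_right (m := 1) le_rfl).differentiableAt one_ne_zero) (hfpos x hx).ne'
    (hh₀ x hx) (hh₀' x hx)

end
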